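/- Decision-hazard-decision dynamic programming with independent noises (finite case): let (W♭_1,...,W♭_S) be independent noises with values in finite sets, X_0,...,X_S finite state spaces, head control sets U♯_s and tail control sets U♭_s finite, and dynamics f_s : X_s × U♯_s × W♭_{s+1} × U♭_{s+1} → X_{s+1}. Define Ṽ_S = j̃ for nonnegative j̃ : X_S → [0,∞], and Ṽ_s(x) = inf_{u♯ ∈ U♯_s} E[ inf_{u♭ ∈ U♭_{s+1}} Ṽ_{s+1}( f_s(x, u♯, W♭_{s+1}, u♭) ) ]. Then Ṽ_s(x_s) equals the infimum, over head control processes (U♯_s,...,U♯_{S-1}) with σ(U♯_{s'}) ⊆ σ(W♭_{s+1},...,W♭_{s'}) and tail control processes (U♭_{s+1},...,U♭_S) with σ(U♭_{s'}) ⊆ σ(W♭_{s+1},...,W♭_{s'}), of E[ j̃(X_S) ], where X_s = x_s and X_{s'+1} = f_{s'}(X_{s'}, U♯_{s'}, W♭_{s'+1}, U♭_{s'+1}). -/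

import Mathlib

open scoped ENNReal
open Classical

/-- Transport of a state along an equality of time indices. -/
def xcast {X : ℕ → Type} {a b : ℕ} (e : a = b) (x : X a) : X b := e ▸ x

/-- The decision-hazard-decision value functions
`Ṽ_{s+n} = K`, `Ṽ_s(x) = inf_{u♯} E[ inf_{u♭} Ṽ_{s+1}(f_s(x, u♯, W♭_{s+1}, u♭)) ]`. -/
noncomputable def VtilD {Wn Uh Ub X : ℕ → Type} {Ω : Type}
    (P : Ω → ℝ≥0∞) (Wp : ∀ s, Ω → Wn s)
    (f : ∀ s, X s → Uh s → Wn (s + 1) → Ub (s + 1) → X (s + 1)) :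
    ∀ (n s : ℕ), (X (s + n) → ℝ≥0∞) → X s → ℝ≥0∞
  | 0, _, K, x => K x
  | n + 1, s, K, x =>
      ⨅ uh : Uh s, ∑' ω : Ω,
        (⨅ ub : Ub (s + 1),
          VtilD P Wp f n (s + 1) (fun x' => K (xcast (by omega) x'))
            (f s x uh (Wp (s + 1) ω) ub)) * P ω

/-- The random state trajectory `X_s = x`,
`X_{s'+1} = f_{s'}(X_{s'}, U♯_{s'}, W♭_{s'+1}, U♭_{s'+1})` driven by a head control process
`Uhp`, a tail control process `Ubp` and the noises. -/
def trajD {Wn Uh Ub X : ℕ → Type} {Ω : Type}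
    (f : ∀ s, X s → Uh s → Wn (s + 1) → Ub (s + 1) → X (s + 1))
    (Uhp : ∀ s, Ω → Uh s) (Ubp : ∀ s, Ω → Ub s) (Wp : ∀ s, Ω → Wn s) :
    ∀ (n s : ℕ), X s → Ω → X (s + n)
  | 0, _, x, _ => x
  | n + 1, s, x, ω =>
      f (s + n) (trajD f Uhp Ubp Wp n s x ω) (Uhp (s + n) ω)
        (Wp (s + n + 1) ω) (Ubp (s + n + 1) ω)

/-! Because `W♭_{s+1}` is independent of `(W♭_1, …, W♭_s)`, the expectation of any quantity
depending on the past and on `W♭_{s+1}` may be computed with an independent copy of `W♭_{s+1}`.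
With this, `E[Ṽ_s(X_s)] ≤ E[Ṽ_{s+1}(X_{s+1})]` along every nonanticipative policy, with equality
for the feedback policy that picks a minimising head decision from `X_s` and then a minimising
tail decision from `(X_s, W♭_{s+1})`. Chaining these steps from `s` to `S` gives both inequalities;
the inductions run over a random initial state, since the state reached after one stage is random.
-/

namespace DecisionHazardDecision

open Finset

section Probability

variable {Ω : Type} [Fintype Ω] (P : Ω → ℝ≥0∞)

noncomputable def prob (A : Ω → Prop) : ℝ≥0∞ := ∑ ω, if A ω then P ω else 0

lemma prob_eq_sum_prob_and {β : Type*} [Fintype β] (Z : Ω → β) (A : Ω → Prop) :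
    prob P A = ∑ b, prob P (fun ω => A ω ∧ Z ω = b) := by
  unfold prob
  rw [Finset.sum_comm]
  refine sum_congr rfl fun ω _ => ?_
  by_cases h : A ω <;> simp [h]

lemma sum_comp_mul_eq_sum_mul_prob {β : Type*} [Fintype β] (Z : Ω → β) (g : β → ℝ≥0∞) :
    ∑ ω, g (Z ω) * P ω = ∑ b, g b * prob P (fun ω => Z ω = b) := by
  simp only [prob, mul_sum, mul_ite, mul_zero]
  rw [Finset.sum_comm]
  refine sum_congr rfl fun ω _ => ?_
  simp

lemma sum_mul_eq_sum_sum_of_prob_and {α β : Type*} [Fintype α] [Fintype β]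
    (A : Ω → α) (B : Ω → β)
    (hAB : ∀ a b, prob P (fun ω => A ω = a ∧ B ω = b)
      = prob P (fun ω => A ω = a) * prob P (fun ω => B ω = b))
    (φ : α → β → ℝ≥0∞) :
    ∑ ω, φ (A ω) (B ω) * P ω = ∑ ω, (∑ ω', φ (A ω) (B ω') * P ω') * P ω := by
  have hjoint : ∑ ω, φ (A ω) (B ω) * P ω
      = ∑ a, ∑ b, φ a b * prob P (fun ω => A ω = a ∧ B ω = b) := by
    rw [sum_comp_mul_eq_sum_mul_prob P (fun ω => (A ω, B ω)) (fun p => φ p.1 p.2),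
      Fintype.sum_prod_type]
    simp only [Prod.mk.injEq]
  simp only [sum_comp_mul_eq_sum_mul_prob P B (φ (A _))]
  rw [sum_comp_mul_eq_sum_mul_prob P A (fun a => ∑ b, φ a b * prob P (fun ω => B ω = b)),
    hjoint]
  refine sum_congr rfl fun a _ => ?_
  rw [sum_mul]
  refine sum_congr rfl fun b _ => ?_
  rw [hAB]
  ring

variable {Wn : ℕ → Type} [∀ s, Fintype (Wn s)]

def IndepOn (Wp : ∀ s, Ω → Wn s) (I : Finset ℕ) : Prop :=
  ∀ v : ∀ r, Wn r,
    prob P (fun ω => ∀ r ∈ I, Wp r ω = v r) = ∏ r ∈ I, prob P (fun ω => Wp r ω = v r)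

variable {P} {Wp : ∀ s, Ω → Wn s} {I J : Finset ℕ}

lemma IndepOn.erase (hP : ∑ ω, P ω = 1) (hI : IndepOn P Wp I) (k : ℕ) :
    IndepOn P Wp (I.erase k) := by
  by_cases hk : k ∈ I
  swap
  · rwa [erase_eq_of_notMem hk]
  intro v
  have htotal : ∑ y, prob P (fun ω => Wp k ω = y) = 1 := by
    simpa [prob, hP] using (prob_eq_sum_prob_and P (Wp k) (fun _ => True)).symm
  calc prob P (fun ω => ∀ r ∈ I.erase k, Wp r ω = v r)
      = ∑ y, prob P (fun ω => ∀ r ∈ I, Wp r ω = Function.update v k y r) := by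
        rw [prob_eq_sum_prob_and P (Wp k)]
        refine sum_congr rfl fun y _ => congrArg (prob P) (funext fun ω => propext ?_)
        constructor
        · rintro ⟨hJ, hy⟩ r hr
          rcases eq_or_ne r k with rfl | hrk
          · simpa using hy
          · simpa [hrk] using hJ r (mem_erase.2 ⟨hrk, hr⟩)
        · intro h
          exact ⟨fun r hr => by simpa [ne_of_mem_erase hr] using h r (mem_of_mem_erase hr),
            by simpa using h k hk⟩
    _ = ∑ y, prob P (fun ω => Wp k ω = y) * ∏ r ∈ I.erase k, prob P (fun ω => Wp r ω = v r) := by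
        refine sum_congr rfl fun y _ => ?_
        rw [hI, ← mul_prod_erase _ _ hk, Function.update_self]
        congr 1
        refine prod_congr rfl fun r hr => ?_
        rw [Function.update_of_ne (ne_of_mem_erase hr)]
    _ = ∏ r ∈ I.erase k, prob P (fun ω => Wp r ω = v r) := by
        rw [← sum_mul, htotal, one_mul]

lemma IndepOn.mono (hP : ∑ ω, P ω = 1) (hI : IndepOn P Wp I) (hJ : J ⊆ I) :
    IndepOn P Wp J := by
  have hsdiff : ∀ K : Finset ℕ, IndepOn P Wp (I \ K) := by
    intro K
    induction K using Finset.induction_on with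
    | empty => simpa using hI
    | insert k K _ ih => rw [sdiff_insert]; exact ih.erase hP k
  simpa [Finset.sdiff_sdiff_eq_self hJ] using hsdiff (I \ J)

lemma IndepOn.sum_mul_eq_sum_sum (hP : ∑ ω, P ω = 1) (hI : IndepOn P Wp I) {k : ℕ}
    (hJ : J ⊆ I) (hk : k ∈ I) (hkJ : k ∉ J) (Φ : Ω → Wn k → ℝ≥0∞)
    (hΦ : ∀ ω ω', (∀ r ∈ J, Wp r ω = Wp r ω') → Φ ω = Φ ω') :
    ∑ ω, Φ ω (Wp k ω) * P ω = ∑ ω, (∑ ω', Φ ω (Wp k ω') * P ω') * P ω := by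
  let A : Ω → ∀ r : J, Wn r := fun ω r => Wp r ω
  have hA : ∀ ω ω', A ω = A ω' ↔ ∀ r ∈ J, Wp r ω = Wp r ω' := by simp [A, funext_iff]
  have hfac : Function.FactorsThrough Φ A := fun ω ω' h => hΦ ω ω' ((hA ω ω').1 h)
  obtain ⟨φ, hφ⟩ : ∃ φ, ∀ ω, Φ ω = φ (A ω) :=
    ⟨Function.extend A Φ 0, fun ω => (hfac.extend_apply 0 ω).symm⟩
  simp only [hφ]
  refine sum_mul_eq_sum_sum_of_prob_and P A (Wp k) (fun a b => ?_) φ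
  by_cases ha : ∃ ω₀, A ω₀ = a
  · obtain ⟨ω₀, rfl⟩ := ha
    set v := Function.update (fun r => Wp r ω₀) k b
    have hvJ : ∀ ω, A ω = A ω₀ ↔ ∀ r ∈ J, Wp r ω = v r := fun ω => by
      rw [hA]
      refine forall₂_congr fun r hr => ?_
      rw [show v r = Wp r ω₀ from Function.update_of_ne (ne_of_mem_of_not_mem hr hkJ) ..]
    have hvk : v k = b := Function.update_self ..
    calc prob P (fun ω => A ω = A ω₀ ∧ Wp k ω = b)
        = prob P (fun ω => ∀ r ∈ insert k J, Wp r ω = v r) := by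
          simp only [hvJ, forall_mem_insert, hvk, and_comm]
      _ = prob P (fun ω => ∀ r ∈ J, Wp r ω = v r) * prob P (fun ω => Wp k ω = v k) := by
          rw [hI.mono hP (insert_subset hk hJ) v, prod_insert hkJ, hI.mono hP hJ v, mul_comm]
      _ = prob P (fun ω => A ω = A ω₀) * prob P (fun ω => Wp k ω = b) := by
          simp only [hvJ, hvk]
  · simp [prob, not_exists.mp ha]

end Probability

section DynamicProgramming

/-- `Z` is `σ(W♭_{a+1}, …, W♭_b)`-measurable. -/
def DependsOn {Ω : Type} {Wn : ℕ → Type} (Wp : ∀ s, Ω → Wn s) (a b : ℕ) {β : Type*}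
    (Z : Ω → β) : Prop :=
  ∀ ω ω', (∀ r, a < r → r ≤ b → Wp r ω = Wp r ω') → Z ω = Z ω'

def IsNonanticipative {Ω : Type} {Wn : ℕ → Type} (Wp : ∀ s, Ω → Wn s) (a : ℕ) {γ : ℕ → Type*}
    (U : ∀ s, Ω → γ s) : Prop :=
  ∀ s, DependsOn Wp a s (U s)

variable {Wn Uh Ub X : ℕ → Type} {Ω : Type} {Wp : ∀ s, Ω → Wn s}

lemma DependsOn.mono {β : Type*} {Z : Ω → β} {a a' b b' : ℕ} (h : DependsOn Wp a b Z)
    (ha : a' ≤ a) (hb : b ≤ b') : DependsOn Wp a' b' Z :=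
  fun ω ω' hω => h ω ω' fun r h₁ h₂ => hω r (by omega) (by omega)

lemma IsNonanticipative.mono {γ : ℕ → Type*} {U : ∀ s, Ω → γ s} {a a' : ℕ}
    (h : IsNonanticipative Wp a U) (ha : a' ≤ a) : IsNonanticipative Wp a' U :=
  fun s => (h s).mono ha le_rfl

lemma IsNonanticipative.update {γ : ℕ → Type*} {U : ∀ s, Ω → γ s} {a t : ℕ} {Z : Ω → γ t}
    (hU : IsNonanticipative Wp a U) (hZ : DependsOn Wp a t Z) :
    IsNonanticipative Wp a (Function.update U t Z) := by
  intro s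
  rcases eq_or_ne s t with rfl | h
  · simpa using hZ
  · simpa [Function.update_of_ne h] using hU s

lemma map_xcast {Y : ℕ → Type} (g : ∀ t, X t → Y (t + 1)) {a b : ℕ} (e : a = b) (x : X a) :
    g b (xcast e x) = xcast (congrArg (· + 1) e) (g a x) := by
  subst e; rfl

variable {f : ∀ s, X s → Uh s → Wn (s + 1) → Ub (s + 1) → X (s + 1)}

lemma trajD_succ_eq_xcast (Uhp : ∀ s, Ω → Uh s) (Ubp : ∀ s, Ω → Ub s) (n s : ℕ) (x : X s)
    (ω : Ω) :
    trajD f Uhp Ubp Wp (n + 1) s x ω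
      = xcast (by omega) (trajD f Uhp Ubp Wp n (s + 1)
          (f s x (Uhp s ω) (Wp (s + 1) ω) (Ubp (s + 1) ω)) ω) := by
  induction n with
  | zero => rfl
  | succ n ih =>
    rw [trajD, ih]
    exact map_xcast (fun t y => f t y (Uhp t ω) (Wp (t + 1) ω) (Ubp (t + 1) ω)) _ _

lemma trajD_congr {Uhp Uhp' : ∀ s, Ω → Uh s} {Ubp Ubp' : ∀ s, Ω → Ub s} {s : ℕ} {ω : Ω}
    (hh : ∀ r, s ≤ r → Uhp r ω = Uhp' r ω) (hb : ∀ r, s < r → Ubp r ω = Ubp' r ω)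
    (n : ℕ) (x : X s) :
    trajD f Uhp Ubp Wp n s x ω = trajD f Uhp' Ubp' Wp n s x ω := by
  induction n with
  | zero => rfl
  | succ n ih => simp only [trajD, ih, hh (s + n) (by omega), hb (s + n + 1) (by omega)]

variable [Fintype Ω] {P : Ω → ℝ≥0∞}

lemma vtilD_succ (n s : ℕ) (K : X (s + (n + 1)) → ℝ≥0∞) (x : X s) :
    VtilD P Wp f (n + 1) s K x
      = ⨅ uh, ∑ ω, (⨅ ub, VtilD P Wp f n (s + 1) (fun x' => K (xcast (by omega) x'))
          (f s x uh (Wp (s + 1) ω) ub)) * P ω := by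
  rw [VtilD]
  simp only [tsum_fintype]

variable [∀ s, Fintype (Wn s)] {S : ℕ}

lemma IndepOn.sum_mul_eq_sum_sum_of_dependsOn (hP : ∑ ω, P ω = 1)
    (hI : IndepOn P Wp (Icc 1 S)) {s : ℕ} (hs : s + 1 ≤ S) (Φ : Ω → Wn (s + 1) → ℝ≥0∞)
    (hΦ : DependsOn Wp 0 s Φ) :
    ∑ ω, Φ ω (Wp (s + 1) ω) * P ω = ∑ ω, (∑ ω', Φ ω (Wp (s + 1) ω') * P ω') * P ω :=
  hI.sum_mul_eq_sum_sum hP (J := Ioc 0 s) (fun r hr => by simp at hr ⊢; omega)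
    (by simp; omega) (by simp) Φ fun ω ω' h => hΦ ω ω' fun r h₁ h₂ => h r (by simp; omega)

lemma sum_vtilD_le_sum_trajD (hP : ∑ ω, P ω = 1) (hI : IndepOn P Wp (Icc 1 S))
    {Uhp : ∀ s, Ω → Uh s} {Ubp : ∀ s, Ω → Ub s}
    (hUh : IsNonanticipative Wp 0 Uhp) (hUb : IsNonanticipative Wp 0 Ubp) :
    ∀ n s, s + n ≤ S → ∀ (K : X (s + n) → ℝ≥0∞) (Y : Ω → X s), DependsOn Wp 0 s Y →
      ∑ ω, VtilD P Wp f n s K (Y ω) * P ω ≤ ∑ ω, K (trajD f Uhp Ubp Wp n s (Y ω) ω) * P ω := by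
  intro n
  induction n with
  | zero => intros; rfl
  | succ n ih =>
    intro s hs K Y hY
    set K' : X (s + 1 + n) → ℝ≥0∞ := fun x' => K (xcast (by omega) x')
    set Y' : Ω → X (s + 1) := fun ω => f s (Y ω) (Uhp s ω) (Wp (s + 1) ω) (Ubp (s + 1) ω)
    have hY' : DependsOn Wp 0 (s + 1) Y' := fun ω ω' h => by
      simp only [Y', hY ω ω' fun r h₁ h₂ => h r h₁ (by omega),
        hUh s ω ω' fun r h₁ h₂ => h r h₁ (by omega), h (s + 1) (by omega) le_rfl,
        hUb (s + 1) ω ω' h]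
    calc ∑ ω, VtilD P Wp f (n + 1) s K (Y ω) * P ω
        ≤ ∑ ω, (∑ ω', (⨅ ub, VtilD P Wp f n (s + 1) K'
            (f s (Y ω) (Uhp s ω) (Wp (s + 1) ω') ub)) * P ω') * P ω := by
          gcongr with ω
          rw [vtilD_succ]
          exact iInf_le _ _
      _ = ∑ ω, (⨅ ub, VtilD P Wp f n (s + 1) K'
            (f s (Y ω) (Uhp s ω) (Wp (s + 1) ω) ub)) * P ω :=
          (hI.sum_mul_eq_sum_sum_of_dependsOn hP (by omega)
            (fun ω w => ⨅ ub, VtilD P Wp f n (s + 1) K' (f s (Y ω) (Uhp s ω) w ub))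
            fun ω ω' h => by simp only [hY ω ω' h, hUh s ω ω' h]).symm
      _ ≤ ∑ ω, VtilD P Wp f n (s + 1) K' (Y' ω) * P ω := by
          gcongr with ω
          exact iInf_le _ _
      _ ≤ ∑ ω, K' (trajD f Uhp Ubp Wp n (s + 1) (Y' ω) ω) * P ω :=
          ih (s + 1) (by omega) K' Y' hY'
      _ = ∑ ω, K (trajD f Uhp Ubp Wp (n + 1) s (Y ω) ω) * P ω := by
          simp only [trajD_succ_eq_xcast]
          rfl

variable [∀ s, Fintype (Uh s)] [∀ s, Nonempty (Uh s)] [∀ s, Fintype (Ub s)]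
  [∀ s, Nonempty (Ub s)]

lemma exists_sum_trajD_le_sum_vtilD (hP : ∑ ω, P ω = 1) (hI : IndepOn P Wp (Icc 1 S))
    {s₀ : ℕ} : ∀ n s, s₀ ≤ s → s + n ≤ S → ∀ (K : X (s + n) → ℝ≥0∞) (Y : Ω → X s),
      DependsOn Wp s₀ s Y → ∃ (Uhp : ∀ s, Ω → Uh s) (Ubp : ∀ s, Ω → Ub s),
        IsNonanticipative Wp s₀ Uhp ∧ IsNonanticipative Wp s₀ Ubp ∧
        ∑ ω, K (trajD f Uhp Ubp Wp n s (Y ω) ω) * P ω ≤ ∑ ω, VtilD P Wp f n s K (Y ω) * P ω := by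
  intro n
  induction n with
  | zero =>
    intros
    exact ⟨fun _ _ => Classical.arbitrary _, fun _ _ => Classical.arbitrary _,
      fun _ _ _ _ => rfl, fun _ _ _ _ => rfl, le_rfl⟩
  | succ n ih =>
    intro s hs₀ hs K Y hY
    set K' : X (s + 1 + n) → ℝ≥0∞ := fun x' => K (xcast (by omega) x')
    set Q : X s → Uh s → Wn (s + 1) → ℝ≥0∞ :=
      fun x uh w => ⨅ ub, VtilD P Wp f n (s + 1) K' (f s x uh w ub)
    choose σh hσh using fun x : X s =>
      exists_eq_ciInf_of_finite (f := fun uh => ∑ ω, Q x uh (Wp (s + 1) ω) * P ω)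
    choose σb hσb using fun (x : X s) (w : Wn (s + 1)) =>
      exists_eq_ciInf_of_finite (f := fun ub => VtilD P Wp f n (s + 1) K' (f s x (σh x) w ub))
    set Uh₀ : Ω → Uh s := fun ω => σh (Y ω)
    set Ub₀ : Ω → Ub (s + 1) := fun ω => σb (Y ω) (Wp (s + 1) ω)
    set Y' : Ω → X (s + 1) := fun ω => f s (Y ω) (Uh₀ ω) (Wp (s + 1) ω) (Ub₀ ω)
    have hUh₀ : DependsOn Wp s₀ s Uh₀ := fun ω ω' h => by simp only [Uh₀, hY ω ω' h]
    have hUb₀ : DependsOn Wp s₀ (s + 1) Ub₀ := fun ω ω' h => by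
      simp only [Ub₀, hY ω ω' fun r h₁ h₂ => h r h₁ (by omega), h (s + 1) (by omega) le_rfl]
    have hY' : DependsOn Wp s₀ (s + 1) Y' := fun ω ω' h => by
      simp only [Y', hUb₀ ω ω' h, hUh₀ ω ω' fun r h₁ h₂ => h r h₁ (by omega),
        hY ω ω' fun r h₁ h₂ => h r h₁ (by omega), h (s + 1) (by omega) le_rfl]
    obtain ⟨Uhp, Ubp, hUh, hUb, hle⟩ := ih (s + 1) (by omega) (by omega) K' Y' hY'
    refine ⟨Function.update Uhp s Uh₀, Function.update Ubp (s + 1) Ub₀, hUh.update hUh₀,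
      hUb.update hUb₀, ?_⟩
    calc ∑ ω, K (trajD f (Function.update Uhp s Uh₀) (Function.update Ubp (s + 1) Ub₀) Wp
            (n + 1) s (Y ω) ω) * P ω
        = ∑ ω, K' (trajD f Uhp Ubp Wp n (s + 1) (Y' ω) ω) * P ω := by
          refine sum_congr rfl fun ω _ => ?_
          rw [trajD_succ_eq_xcast, Function.update_self, Function.update_self,
            trajD_congr (Uhp' := Uhp) (Ubp' := Ubp)
              (fun r hr => by simp [Function.update_of_ne (show r ≠ s by omega)])
              (fun r hr => by simp [Function.update_of_ne (show r ≠ s + 1 by omega)])]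
      _ ≤ ∑ ω, VtilD P Wp f n (s + 1) K' (Y' ω) * P ω := hle
      _ = ∑ ω, Q (Y ω) (Uh₀ ω) (Wp (s + 1) ω) * P ω :=
          sum_congr rfl fun ω _ => congrArg (· * P ω) (hσb _ _)
      _ = ∑ ω, (∑ ω', Q (Y ω) (Uh₀ ω) (Wp (s + 1) ω') * P ω') * P ω :=
          hI.sum_mul_eq_sum_sum_of_dependsOn hP (by omega) (fun ω => Q (Y ω) (Uh₀ ω))
            fun ω ω' h => by simp only [Uh₀, (hY.mono (Nat.zero_le s₀) le_rfl) ω ω' h]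
      _ = ∑ ω, VtilD P Wp f (n + 1) s K (Y ω) * P ω := by
          refine sum_congr rfl fun ω _ => ?_
          rw [vtilD_succ]
          exact congrArg (· * P ω) (hσh (Y ω))

end DynamicProgramming

end DecisionHazardDecision

open DecisionHazardDecision

theorem dhd_dp_independent_general {Wn Uh Ub X : ℕ → Type}
    [∀ s, Fintype (Wn s)]
    [∀ s, Fintype (Uh s)] [∀ s, Nonempty (Uh s)]
    [∀ s, Fintype (Ub s)] [∀ s, Nonempty (Ub s)]
    {Ω : Type} [Fintype Ω]
    (P : Ω → ℝ≥0∞) (hP : ∑' ω : Ω, P ω = 1)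
    (Wp : ∀ s, Ω → Wn s) (S : ℕ)
    (hind : ∀ w : ∀ s, Wn s,
      (∑' ω : Ω, if (∀ s, 1 ≤ s → s ≤ S → Wp s ω = w s) then P ω else 0)
        = ∏ s ∈ Finset.Icc 1 S, ∑' ω : Ω, if Wp s ω = w s then P ω else 0)
    (f : ∀ s, X s → Uh s → Wn (s + 1) → Ub (s + 1) → X (s + 1))
    (jt : X S → ℝ≥0∞)
    (n s : ℕ) (e : s + n = S) (x : X s) :
    VtilD P Wp f n s (fun x' => jt (xcast e x')) x
      = ⨅ p : {q : (∀ s', Ω → Uh s') × (∀ s', Ω → Ub s') //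
            (∀ (s' : ℕ) (ω ω' : Ω),
              (∀ r, s < r → r ≤ s' → Wp r ω = Wp r ω') → q.1 s' ω = q.1 s' ω') ∧
            (∀ (s' : ℕ) (ω ω' : Ω),
              (∀ r, s < r → r ≤ s' → Wp r ω = Wp r ω') → q.2 s' ω = q.2 s' ω')},
          ∑' ω : Ω, jt (xcast e (trajD f p.1.1 p.1.2 Wp n s x ω)) * P ω := by
  have hP₁ : ∑ ω, P ω = 1 := by rwa [tsum_fintype] at hP
  have hI : IndepOn P Wp (Finset.Icc 1 S) := fun v => by
    simp only [prob, Finset.mem_Icc, and_imp]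
    convert hind v using 2 <;> rw [tsum_fintype]
    congr!
  have hmean : ∀ c : ℝ≥0∞, ∑ ω, c * P ω = c := fun c => by rw [← Finset.mul_sum, hP₁, mul_one]
  have hx : DependsOn Wp s s fun _ : Ω => x := fun _ _ _ => rfl
  simp only [tsum_fintype]
  refine le_antisymm (le_iInf fun ⟨⟨Uhp, Ubp⟩, hUh, hUb⟩ => ?_) ?_
  · have hUh₀ : IsNonanticipative Wp 0 Uhp := IsNonanticipative.mono hUh (Nat.zero_le s)
    have hUb₀ : IsNonanticipative Wp 0 Ubp := IsNonanticipative.mono hUb (Nat.zero_le s)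
    exact (hmean _).symm.trans_le <| sum_vtilD_le_sum_trajD hP₁ hI hUh₀ hUb₀ n s e.le _ _
      (hx.mono (Nat.zero_le s) le_rfl)
  · obtain ⟨Uhp, Ubp, hUh, hUb, hle⟩ := exists_sum_trajD_le_sum_vtilD (Uh := Uh) (Ub := Ub)
      (f := f) hP₁ hI n s le_rfl e.le (fun x' => jt (xcast e x')) _ hx
    rw [hmean] at hle
    exact iInf_le_of_le ⟨(Uhp, Ubp), hUh, hUb⟩ hle

/-- decision-hazard-decision dynamic programming with independent noises
(finite case). With `(W♭_1,…,W♭_S)` mutually independent (joint pmf factorizes),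
`Ṽ_S = j̃` and `Ṽ_s(x) = inf_{u♯} E[ inf_{u♭} Ṽ_{s+1}(f_s(x,u♯,W♭_{s+1},u♭)) ]`, the value
`Ṽ_s(x_s)` equals the infimum over head control processes (`σ(U♯_{s'}) ⊆
σ(W♭_{s+1},…,W♭_{s'})`) and tail control processes (`σ(U♭_{s'}) ⊆ σ(W♭_{s+1},…,W♭_{s'})`)
of `E[ j̃(X_S) ]`, where `X_s = x_s` and
`X_{s'+1} = f_{s'}(X_{s'}, U♯_{s'}, W♭_{s'+1}, U♭_{s'+1})`. -/
theorem dhd_dp_independent {Wn Uh Ub X : ℕ → Type}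
    [∀ s, Fintype (Wn s)] [∀ s, Nonempty (Wn s)]
    [∀ s, Fintype (Uh s)] [∀ s, Nonempty (Uh s)]
    [∀ s, Fintype (Ub s)] [∀ s, Nonempty (Ub s)] [∀ s, Fintype (X s)]
    {Ω : Type} [Fintype Ω] [Nonempty Ω]
    (P : Ω → ℝ≥0∞) (hP : ∑' ω : Ω, P ω = 1)
    (Wp : ∀ s, Ω → Wn s) (S : ℕ)
    (hind : ∀ w : ∀ s, Wn s,
      (∑' ω : Ω, if (∀ s, 1 ≤ s → s ≤ S → Wp s ω = w s) then P ω else 0)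
        = ∏ s ∈ Finset.Icc 1 S, ∑' ω : Ω, if Wp s ω = w s then P ω else 0)
    (f : ∀ s, X s → Uh s → Wn (s + 1) → Ub (s + 1) → X (s + 1))
    (jt : X S → ℝ≥0∞)
    (n s : ℕ) (e : s + n = S) (x : X s) :
    VtilD P Wp f n s (fun x' => jt (xcast e x')) x
      = ⨅ p : {q : (∀ s', Ω → Uh s') × (∀ s', Ω → Ub s') //
            (∀ (s' : ℕ) (ω ω' : Ω),
              (∀ r, s < r → r ≤ s' → Wp r ω = Wp r ω') → q.1 s' ω = q.1 s' ω') ∧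
            (∀ (s' : ℕ) (ω ω' : Ω),
              (∀ r, s < r → r ≤ s' → Wp r ω = Wp r ω') → q.2 s' ω = q.2 s' ω')},
          ∑' ω : Ω, jt (xcast e (trajD f p.1.1 p.1.2 Wp n s x ω)) * P ω :=
  dhd_dp_independent_general P hP Wp S hind f jt n s e x
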